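/- arXiv:1408.4554 — 2 statements merged into one kernel-verified Lean document; each statement's English description precedes it below -/
import Mathlib

section
/- Let G be a topological group and π : G → U(H) a continuous unitary representation on a finite-dimensional complex Hilbert space H. Then every vector of H is a smooth vector, i.e. H_∞ = H. -/
open Filter Topology MeasureTheory
open scoped Topology

noncomputable section

/-- The set of continuous one-parameter subgroups of a topological group `G`,
topologized as a subspace of `C(ℝ, G)` (compact-open topology, i.e. topology of
uniform convergence on compact subsets of `ℝ`). -/
def OneParam (G : Type*) [TopologicalSpace G] [Group G] : Type _ :=
  {γ : C(ℝ, G) // ∀ t s : ℝ, γ (t + s) = γ t * γ s}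

instance (G : Type*) [TopologicalSpace G] [Group G] : TopologicalSpace (OneParam G) :=
  inferInstanceAs (TopologicalSpace {γ : C(ℝ, G) // ∀ t s : ℝ, γ (t + s) = γ t * γ s})

section DirDeriv

variable {G : Type*} [TopologicalSpace G] [Group G]
variable {Y : Type*} [TopologicalSpace Y] [AddCommGroup Y] [Module ℝ Y]

/-- `φ` has directional derivative `w` at `g` along the one-parameter subgroup `γ`:
`w = lim_{t → 0} (φ(g·γ(t)) - φ(g))/t`. -/
def HasDirDerivAt (φ : G → Y) (γ : OneParam G) (g : G) (w : Y) : Prop :=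
  Tendsto (fun t : ℝ => t⁻¹ • (φ (g * γ.1 t) - φ g)) (𝓝[≠] (0 : ℝ)) (𝓝 w)

/-- The directional derivative `(D_γ φ)(g) = lim_{t → 0} (φ(g·γ(t)) - φ(g))/t`
(junk value if the limit does not exist). -/
def dirDeriv (φ : G → Y) (γ : OneParam G) (g : G) : Y :=
  haveI : Nonempty Y := ⟨0⟩
  limUnder (𝓝[≠] (0 : ℝ)) (fun t : ℝ => t⁻¹ • (φ (g * γ.1 t) - φ g))

/-- The right directional derivative `(D^R_γ φ)(g) = lim_{t → 0} (φ(γ(-t)·g) - φ(g))/t`. -/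
def rightDirDeriv (φ : G → Y) (γ : OneParam G) (g : G) : Y :=
  haveI : Nonempty Y := ⟨0⟩
  limUnder (𝓝[≠] (0 : ℝ)) (fun t : ℝ => t⁻¹ • (φ (γ.1 (-t) * g) - φ g))

/-- Iterated directional derivatives: `iteratedD φ k γ g = (D_{γ k}(⋯(D_{γ 1} φ)⋯))(g)`,
with the innermost derivative taken along `γ 0`. -/
def iteratedD (φ : G → Y) : (k : ℕ) → (Fin k → OneParam G) → G → Y
  | 0, _ => φ
  | (k + 1), γ => dirDeriv (iteratedD φ k (fun i => γ i.castSucc)) (γ (Fin.last k))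

/-- `φ ∈ C^∞(G, Y)`: `φ` is continuous and all of its iterated directional derivatives
exist everywhere and are jointly continuous. -/
def IsCSmooth (φ : G → Y) : Prop :=
  Continuous φ ∧ ∀ k : ℕ,
    (∀ (γ : Fin (k + 1) → OneParam G) (g : G),
      HasDirDerivAt (iteratedD φ k (fun i => γ i.castSucc)) (γ (Fin.last k)) g
        (iteratedD φ (k + 1) γ g)) ∧
    Continuous (fun p : (Fin (k + 1) → OneParam G) × G => iteratedD φ (k + 1) p.1 p.2)

theorem IsCSmooth.continuous_iteratedD {φ : G → Y} (hφ : IsCSmooth φ) (k : ℕ) :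
    Continuous (fun p : (Fin k → OneParam G) × G => iteratedD φ k p.1 p.2) := by
  cases k with
  | zero => exact hφ.1.comp continuous_snd
  | succ k => exact (hφ.2 k).2

end DirDeriv

/-- A continuous unitary representation of a topological group `G` on a complex
Hilbert space `H`. -/
structure UnitaryRep (G : Type*) (H : Type*) [TopologicalSpace G] [Group G]
    [NormedAddCommGroup H] [InnerProductSpace ℂ H] where
  toFun : G → H →L[ℂ] H
  map_one' : toFun 1 = 1
  map_mul' : ∀ x y : G, toFun (x * y) = (toFun x).comp (toFun y)
  inner_map' : ∀ (x : G) (v w : H), (inner ℂ (toFun x v) (toFun x w) : ℂ) = inner ℂ v w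
  surjective' : ∀ x : G, Function.Surjective (toFun x)
  continuous' : Continuous fun p : G × H => toFun p.1 p.2

namespace UnitaryRep

variable {G : Type*} [TopologicalSpace G] [Group G]
variable {H : Type*} [NormedAddCommGroup H] [InnerProductSpace ℂ H]

/-- The space of smooth vectors `H_∞` of a representation. -/
def smoothVec (π : UnitaryRep G H) : Set H :=
  {v : H | IsCSmooth fun g : G => π.toFun g v}

/-- `dπ(γ)v = lim_{t → 0} (π(γ(t))v - v)/t`. -/
def dpi (π : UnitaryRep G H) (γ : OneParam G) (v : H) : H :=
  dirDeriv (fun g : G => π.toFun g v) γ 1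

/-- The moment map `Ψ_π(v)(γ) = (1/i)⟨dπ(γ)v, v⟩/⟨v, v⟩`, viewed as an element of
`ℝ^{𝔏(G)}`. -/
def momentMap (π : UnitaryRep G H) (v : H) : OneParam G → ℝ :=
  fun γ => ((inner ℂ v (π.dpi γ v) : ℂ) / (inner ℂ v v : ℂ) / Complex.I).re

/-- The image `I⁰_π = Ψ_π(H_∞ \ {0})` of the moment map. -/
def momentSet0 (π : UnitaryRep G H) : Set (OneParam G → ℝ) :=
  π.momentMap '' (π.smoothVec \ {0})

/-- The closed moment set `I_π`, the closure of `I⁰_π` in `ℝ^{𝔏(G)}` with the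
topology of pointwise convergence. -/
def momentSet (π : UnitaryRep G H) : Set (OneParam G → ℝ) :=
  closure π.momentSet0

end UnitaryRep

/-!
In finite dimension a strongly continuous representation is norm continuous, so for each
one-parameter subgroup `γ` the map `t ↦ π (γ t)` is a continuous one-parameter group in the
Banach algebra of operators on `H`. Such a group is differentiable: once
`B = ∫ s in 0..ε, π (γ s)` is invertible, `π (γ t) = (∫ s in t..t + ε, π (γ s)) * B⁻¹`.
Keeping `ε` fixed, the same formula shows that the generator `dπ(γ)` depends continuously on
`γ`. Hence `D_γ (π (·) v) g = π g (dπ(γ) v)`, and by induction the iterated derivatives of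
`π (·) v` are `π g (dπ(γₖ) ⋯ dπ(γ₁) v)`, jointly continuous in `(γ, g)`.
-/

section OneParameterGroup

variable {A : Type*} [NormedRing A] [NormedAlgebra ℝ A] [CompleteSpace A] {u : ℝ → A}

lemma mul_intervalIntegral_eq_of_map_add (hu : Continuous u)
    (hadd : ∀ s t, u (s + t) = u s * u t) (t ε : ℝ) :
    u t * ∫ s in (0 : ℝ)..ε, u s = ∫ s in t..t + ε, u s := by
  have hcomm := (ContinuousLinearMap.mul ℝ A (u t)).intervalIntegral_comp_comm
    (hu.intervalIntegrable (μ := MeasureTheory.volume) 0 ε)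
  simp only [ContinuousLinearMap.mul_apply', ← hadd] at hcomm
  rw [← hcomm, intervalIntegral.integral_comp_add_left u t, add_zero]

lemma hasDerivAt_of_isUnit_intervalIntegral (hu : Continuous u)
    (hadd : ∀ s t, u (s + t) = u s * u t) {ε : ℝ} (hB : IsUnit (∫ s in (0 : ℝ)..ε, u s))
    (t : ℝ) :
    HasDerivAt u ((u (t + ε) - u t) * Ring.inverse (∫ s in (0 : ℝ)..ε, u s)) t := by
  set B := ∫ s in (0 : ℝ)..ε, u s
  have hprim : ∀ t, u t * B = (∫ s in (0 : ℝ)..t + ε, u s) - ∫ s in (0 : ℝ)..t, u s := by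
    intro t
    rw [mul_intervalIntegral_eq_of_map_add hu hadd, intervalIntegral.integral_interval_sub_left
      (hu.intervalIntegrable _ _) (hu.intervalIntegrable _ _)]
  have hderiv : HasDerivAt (fun t => u t * B) (u (t + ε) - u t) t := by
    rw [funext hprim]
    exact (((hu.integral_hasStrictDerivAt 0 (t + ε)).hasDerivAt).comp_add_const t ε).sub
      (hu.integral_hasStrictDerivAt 0 t).hasDerivAt
  convert hderiv.mul_const (Ring.inverse B) using 1
  ext s
  rw [mul_assoc, Ring.mul_inverse_cancel B hB, mul_one]

lemma exists_isUnit_intervalIntegral (hu : Continuous u) (h0 : u 0 = 1) :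
    ∃ ε : ℝ, IsUnit (∫ s in (0 : ℝ)..ε, u s) := by
  -- the averages of `u` over `[0, ε]` tend to `u 0 = 1`, and the units form a neighbourhood of `1`
  have hslope : Tendsto (fun ε : ℝ => ε⁻¹ • ∫ s in (0 : ℝ)..ε, u s) (𝓝[≠] 0) (𝓝 1) := by
    convert (hu.integral_hasStrictDerivAt 0 0).hasDerivAt.tendsto_slope using 1
    · ext ε
      simp [slope_def_module]
    · rw [h0]
  obtain ⟨ε, hunit, hε⟩ :=
    ((hslope.eventually (Units.nhds 1)).and self_mem_nhdsWithin).exists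
  exact ⟨ε, (isUnit_smul_iff (Units.mk0 ε⁻¹ (inv_ne_zero hε)) _).mp hunit⟩

theorem differentiable_of_map_add (hu : Continuous u) (h0 : u 0 = 1)
    (hadd : ∀ s t, u (s + t) = u s * u t) : Differentiable ℝ u := by
  obtain ⟨ε, hB⟩ := exists_isUnit_intervalIntegral hu h0
  exact fun t => (hasDerivAt_of_isUnit_intervalIntegral hu hadd hB t).differentiableAt

theorem continuous_deriv_zero_of_map_add {X : Type*} [TopologicalSpace X] {u : X → ℝ → A}
    (hu : Continuous (Function.uncurry u)) (h0 : ∀ x, u x 0 = 1)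
    (hadd : ∀ x s t, u x (s + t) = u x s * u x t) : Continuous fun x => deriv (u x) 0 := by
  refine continuous_iff_continuousAt.mpr fun x₀ => ?_
  obtain ⟨ε, hB₀⟩ := exists_isUnit_intervalIntegral (hu.uncurry_left x₀) (h0 x₀)
  have hB : Continuous fun x => ∫ s in (0 : ℝ)..ε, u x s :=
    intervalIntegral.continuous_parametric_intervalIntegral_of_continuous' hu 0 ε
  have hderiv : ∀ᶠ x in 𝓝 x₀,
      (u x (0 + ε) - u x 0) * Ring.inverse (∫ s in (0 : ℝ)..ε, u x s) = deriv (u x) 0 := by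
    filter_upwards [hB.continuousAt.preimage_mem_nhds (Units.nhds hB₀.unit)] with x hx
    exact (hasDerivAt_of_isUnit_intervalIntegral (hu.uncurry_left x) (hadd x) hx 0).deriv.symm
  refine ContinuousAt.congr ?_ hderiv
  refine ((((hu.uncurry_right _).sub (hu.uncurry_right 0)).continuousAt).mul ?_)
  have hinv := NormedRing.inverse_continuousAt hB₀.unit
  rw [hB₀.unit_spec] at hinv
  exact ContinuousAt.comp (x := x₀) hinv hB.continuousAt

end OneParameterGroup

theorem HasDirDerivAt.dirDeriv_eq {G : Type*} [TopologicalSpace G] [Group G]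
    {Y : Type*} [TopologicalSpace Y] [T2Space Y] [AddCommGroup Y] [Module ℝ Y]
    {φ : G → Y} {γ : OneParam G} {g : G} {w : Y} (h : HasDirDerivAt φ γ g w) :
    dirDeriv φ γ g = w :=
  h.limUnder_eq

namespace OneParam

variable {G : Type*} [TopologicalSpace G] [Group G]

lemma map_zero (γ : OneParam G) : γ.1 0 = 1 := by
  simpa using γ.2 0 0

lemma continuous_uncurry : Continuous fun p : OneParam G × ℝ => p.1.1 p.2 :=
  continuous_eval.comp (continuous_subtype_val.prodMap continuous_id)

end OneParam

namespace UnitaryRep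

variable {G : Type*} [TopologicalSpace G] [Group G]
variable {H : Type*} [NormedAddCommGroup H] [InnerProductSpace ℂ H]

def generator (π : UnitaryRep G H) (γ : OneParam G) : H →L[ℂ] H :=
  deriv (fun t => π.toFun (γ.1 t)) 0

def iteratedGenerator (π : UnitaryRep G H) (v : H) : (k : ℕ) → (Fin k → OneParam G) → H
  | 0, _ => v
  | k + 1, γ => π.generator (γ (Fin.last k)) (iteratedGenerator π v k fun i => γ i.castSucc)

variable (π : UnitaryRep G H)

lemma continuous_toFun_apply (v : H) : Continuous fun g => π.toFun g v :=
  π.continuous'.comp (continuous_id.prodMk continuous_const)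

lemma toFun_oneParam_add (γ : OneParam G) (s t : ℝ) :
    π.toFun (γ.1 (s + t)) = π.toFun (γ.1 s) * π.toFun (γ.1 t) := by
  rw [γ.2, π.map_mul']
  rfl

lemma toFun_oneParam_zero (γ : OneParam G) : π.toFun (γ.1 0) = 1 := by
  rw [γ.map_zero, π.map_one']

variable [FiniteDimensional ℂ H]

lemma continuous_toFun : Continuous π.toFun :=
  continuous_clm_apply.mpr π.continuous_toFun_apply

lemma hasDerivAt_generator (γ : OneParam G) :
    HasDerivAt (fun t => π.toFun (γ.1 t)) (π.generator γ) 0 :=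
  (differentiable_of_map_add (π.continuous_toFun.comp γ.1.continuous)
    (π.toFun_oneParam_zero γ) (π.toFun_oneParam_add γ) 0).hasDerivAt

lemma continuous_generator : Continuous π.generator :=
  continuous_deriv_zero_of_map_add (u := fun (γ : OneParam G) t => π.toFun (γ.1 t))
    (π.continuous_toFun.comp OneParam.continuous_uncurry) π.toFun_oneParam_zero
    π.toFun_oneParam_add

lemma hasDirDerivAt_toFun_apply (v : H) (γ : OneParam G) (g : G) :
    HasDirDerivAt (fun g => π.toFun g v) γ g (π.toFun g (π.generator γ v)) := by
  have hslope := (π.hasDerivAt_generator γ).tendsto_slope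
  have happly : Continuous fun T : H →L[ℂ] H => π.toFun g (T v) :=
    (π.toFun g).continuous.comp (continuous_id.clm_apply continuous_const)
  unfold HasDirDerivAt
  convert (happly.tendsto _).comp hslope using 1
  ext t
  simp [slope_def_module, π.toFun_oneParam_zero, π.map_mul']

lemma iteratedD_toFun_apply (v : H) (k : ℕ) (γ : Fin k → OneParam G) :
    iteratedD (fun g => π.toFun g v) k γ = fun g => π.toFun g (π.iteratedGenerator v k γ) := by
  induction k with
  | zero => rfl
  | succ k ih =>
    ext g
    rw [iteratedD, ih]
    exact (π.hasDirDerivAt_toFun_apply _ _ g).dirDeriv_eq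

lemma continuous_iteratedGenerator (v : H) (k : ℕ) :
    Continuous fun γ : Fin k → OneParam G => π.iteratedGenerator v k γ := by
  induction k with
  | zero => exact continuous_const
  | succ k ih =>
    exact ((π.continuous_generator.comp (continuous_apply (Fin.last k))).clm_apply
      (ih.comp (continuous_pi fun i => continuous_apply i.castSucc)))

end UnitaryRep

/-- For a continuous unitary representation of a topological group on a finite-dimensional
complex Hilbert space, every vector is a smooth vector. -/
theorem smoothVec_eq_univ_of_finiteDimensional
    (G : Type*) [TopologicalSpace G] [Group G]
    (H : Type*) [NormedAddCommGroup H] [InnerProductSpace ℂ H] [FiniteDimensional ℂ H]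
    (π : UnitaryRep G H) :
    π.smoothVec = Set.univ := by
  refine Set.eq_univ_of_forall fun v => ⟨π.continuous_toFun_apply v, fun k => ⟨?_, ?_⟩⟩
  · intro γ g
    rw [π.iteratedD_toFun_apply, π.iteratedD_toFun_apply]
    exact π.hasDirDerivAt_toFun_apply _ _ g
  · simp only [π.iteratedD_toFun_apply]
    exact π.continuous'.comp (continuous_snd.prodMk
      ((π.continuous_iteratedGenerator v (k + 1)).comp continuous_fst))
end
end

section
/- Let G be a topological group and π : G → U(H) a continuous unitary representation. Then the moment map Ψ_π : H_∞ \ {0} → ℝ^{𝔏(G)} is continuous, where H_∞ \ {0} carries the topology of the space of smooth vectors H_∞ and ℝ^{𝔏(G)} carries the topology of pointwise convergence. -/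
open Filter Topology MeasureTheory
open scoped Topology

noncomputable section

/-- The space `C^∞(G, Y)` of smooth functions, topologized below by uniform convergence
of all iterated directional derivatives on compact sets (this coincides with the locally
convex topology given by the seminorms `p_{K₁,K₂}`). -/
def SmoothFns (G : Type*) [TopologicalSpace G] [Group G]
    (Y : Type*) [TopologicalSpace Y] [AddCommGroup Y] [Module ℝ Y] : Type _ :=
  {φ : G → Y // IsCSmooth φ}

variable {G : Type*} [TopologicalSpace G] [Group G]
variable {Y : Type*} [TopologicalSpace Y] [AddCommGroup Y] [Module ℝ Y]

/-- The `k`-th iterated derivative of a smooth function, as a continuous map. -/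
def SmoothFns.iteratedDCM (f : SmoothFns G Y) (k : ℕ) :
    C((Fin k → OneParam G) × G, Y) :=
  ⟨fun p => iteratedD f.1 k p.1 p.2, f.2.continuous_iteratedD k⟩

/-- The topology of `C^∞(G, Y)`: the coarsest topology making all the maps
`f ↦ D^k f ∈ C(𝔏(G)^k × G, Y)` continuous, where the spaces of continuous maps carry the
compact-open topology (the topology of uniform convergence on compact sets). -/
instance : TopologicalSpace (SmoothFns G Y) :=
  ⨅ k : ℕ, TopologicalSpace.induced (fun f : SmoothFns G Y => f.iteratedDCM k)
    inferInstance

namespace UnitaryRep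

variable {H : Type*} [NormedAddCommGroup H] [InnerProductSpace ℂ H]

/-- The space of smooth vectors `H_∞`, as a type. -/
def SmoothVecs (π : UnitaryRep G H) : Type _ := {v : H // v ∈ π.smoothVec}

/-- The canonical injection `A : H_∞ → C^∞(G, H)`, `v ↦ π(·)v`. -/
def smoothVecEmbed (π : UnitaryRep G H) (v : π.SmoothVecs) : SmoothFns G H :=
  ⟨fun g : G => π.toFun g v.1, v.2⟩

/-- The topology of the space of smooth vectors: the topology induced from `C^∞(G, H)`
via `A : v ↦ π(·)v`. -/
instance (π : UnitaryRep G H) : TopologicalSpace π.SmoothVecs :=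
  TopologicalSpace.induced π.smoothVecEmbed inferInstance

end UnitaryRep

end

/-! Both `v = π(1)v` and `dπ(γ)v` are iterated derivatives of `π(·)v` at the identity, of
order 0 and 1, and point evaluations of iterated derivatives are continuous on `C^∞(G, H)`.
The moment map at `γ` is a quotient of inner products of these, with denominator `‖v‖² ≠ 0`. -/

namespace SmoothFns

variable {G : Type*} [TopologicalSpace G] [Group G]
variable {Y : Type*} [TopologicalSpace Y] [AddCommGroup Y] [Module ℝ Y]

theorem continuous_iteratedDCM (k : ℕ) :
    Continuous fun f : SmoothFns G Y => f.iteratedDCM k :=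
  continuous_iInf_dom continuous_induced_dom

theorem continuous_iteratedD_apply (k : ℕ) (γ : Fin k → OneParam G) (g : G) :
    Continuous fun f : SmoothFns G Y => iteratedD f.1 k γ g :=
  (continuous_eval_const (γ, g)).comp (continuous_iteratedDCM k)

end SmoothFns

namespace UnitaryRep

variable {G : Type*} [TopologicalSpace G] [Group G]
variable {H : Type*} [NormedAddCommGroup H] [InnerProductSpace ℂ H]

theorem continuous_smoothVecEmbed (π : UnitaryRep G H) : Continuous π.smoothVecEmbed :=
  continuous_induced_dom

theorem continuous_smoothVecs_val (π : UnitaryRep G H) :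
    Continuous fun v : π.SmoothVecs => v.1 := by
  refine ((SmoothFns.continuous_iteratedD_apply 0 Fin.elim0 1).comp
    π.continuous_smoothVecEmbed).congr fun v => ?_
  show π.toFun 1 v.1 = v.1
  rw [π.map_one']
  rfl

theorem continuous_dpi (π : UnitaryRep G H) (γ : OneParam G) :
    Continuous fun v : π.SmoothVecs => π.dpi γ v.1 :=
  ((SmoothFns.continuous_iteratedD_apply 1 (fun _ => γ) 1).comp
    π.continuous_smoothVecEmbed).congr fun _ => rfl

end UnitaryRep

/-- The moment map `Ψ_π : H_∞ \ {0} → ℝ^{𝔏(G)}` of a continuous unitary representation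
is continuous, `H_∞` carrying the topology of the space of smooth vectors and `ℝ^{𝔏(G)}`
the topology of pointwise convergence. -/
theorem momentMap_continuousOn
    (G : Type*) [TopologicalSpace G] [Group G]
    (H : Type*) [NormedAddCommGroup H] [InnerProductSpace ℂ H]
    (π : UnitaryRep G H) :
    ContinuousOn (fun v : π.SmoothVecs => π.momentMap v.1)
      {v : π.SmoothVecs | v.1 ≠ 0} := by
  have hval := π.continuous_smoothVecs_val
  refine continuousOn_pi.2 fun γ => Complex.continuous_re.comp_continuousOn ?_
  refine ContinuousOn.div_const ?_ _
  refine (hval.inner (π.continuous_dpi γ)).continuousOn.div (hval.inner hval).continuousOn ?_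
  intro v hv
  simpa only [Set.mem_ofPred_eq, ne_eq, inner_self_eq_zero] using hv
end
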